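/- arXiv:1809.10219 — 3 statements merged into one kernel-verified Lean document; each statement's English description precedes it below -/
import Mathlib

section
/- The capped binary entropy hc is subadditive on the nonnegative reals: for all real numbers x₁, x₂ ≥ 0, hc(x₁ + x₂) ≤ hc(x₁) + hc(x₂). -/
/-!
Capping `h` at its maximum `1/2` keeps it concave on `[0, ∞)`: `x ↦ min x (1/2)` is concave and
`h` is concave and increasing on `[0, 1/2]`. A concave function `f` on `[0, ∞)` with `f 0 ≥ 0`
satisfies `t f(s) ≤ f(t s)` for `t ∈ [0, 1]`, and splitting `s = x₁ + x₂` with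
`t = x₁ / s` and `t = x₂ / s` gives `f(x₁ + x₂) ≤ f(x₁) + f(x₂)`.
-/

/-- Binary entropy (base 2), with the convention `0 * log₂ 0 = 0`
(automatic since `Real.logb 2 0 = 0`). -/
noncomputable def binEnt (x : ℝ) : ℝ :=
  -(x * Real.logb 2 x) - (1 - x) * Real.logb 2 (1 - x)

/-- Capped binary entropy `hc(x) = h(min(x, 1/2))`. -/
noncomputable def cappedBinEnt (x : ℝ) : ℝ := binEnt (min x (1 / 2))

open Real Set

section Concave

variable {𝕜 : Type*} [Field 𝕜] [LinearOrder 𝕜] [IsStrictOrderedRing 𝕜]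

lemma ConcaveOn.comp_min_const {g : 𝕜 → 𝕜} {a c : 𝕜} (hac : a ≤ c)
    (hg : ConcaveOn 𝕜 (Icc a c) g) (hg' : MonotoneOn g (Icc a c)) :
    ConcaveOn 𝕜 (Ici a) fun x => g (min x c) := by
  have himage : (fun x => min x c) '' Ici a = Icc a c := by
    ext y
    constructor
    · rintro ⟨x, hx, rfl⟩
      exact ⟨le_min hx hac, min_le_right x c⟩
    · rintro ⟨hay, hyc⟩
      exact ⟨y, hay, min_eq_left hyc⟩
  have hmin : ConcaveOn 𝕜 (Ici a) fun x => min x c :=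
    (concaveOn_id (convex_Ici a)).inf (concaveOn_const c (convex_Ici a))
  rw [← himage] at hg hg'
  exact hg.comp hmin hg'

lemma ConcaveOn.mul_le_map_mul {f : 𝕜 → 𝕜} (hf : ConcaveOn 𝕜 (Ici 0) f) (h₀ : 0 ≤ f 0)
    {s t : 𝕜} (hs : 0 ≤ s) (ht₀ : 0 ≤ t) (ht₁ : t ≤ 1) : t * f s ≤ f (t * s) := by
  have key := hf.2 (mem_Ici.2 hs) (mem_Ici.2 le_rfl) ht₀ (sub_nonneg.2 ht₁) (add_sub_cancel t 1)
  simp only [smul_eq_mul, mul_zero, add_zero] at key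
  nlinarith [mul_nonneg (sub_nonneg.2 ht₁) h₀]

lemma ConcaveOn.map_add_le_add {f : 𝕜 → 𝕜} (hf : ConcaveOn 𝕜 (Ici 0) f) (h₀ : 0 ≤ f 0)
    {x y : 𝕜} (hx : 0 ≤ x) (hy : 0 ≤ y) : f (x + y) ≤ f x + f y := by
  rcases (add_nonneg hx hy).eq_or_lt with hs | hs
  · obtain ⟨rfl, rfl⟩ : x = 0 ∧ y = 0 := ⟨by linarith, by linarith⟩
    simpa using h₀
  have hx' := hf.mul_le_map_mul h₀ hs.le (div_nonneg hx hs.le)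
    ((div_le_one hs).2 (le_add_of_nonneg_right hy))
  have hy' := hf.mul_le_map_mul h₀ hs.le (div_nonneg hy hs.le)
    ((div_le_one hs).2 (le_add_of_nonneg_left hx))
  rw [div_mul_cancel₀ _ hs.ne'] at hx' hy'
  calc f (x + y) = x / (x + y) * f (x + y) + y / (x + y) * f (x + y) := by
        rw [← add_mul, ← add_div, div_self hs.ne', one_mul]
    _ ≤ f x + f y := add_le_add hx' hy'

end Concave

lemma binEnt_eq_binEntropy_div (x : ℝ) : binEnt x = binEntropy x / log 2 := by
  simp only [binEnt, binEntropy, logb, log_inv]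
  ring

lemma concaveOn_binEnt : ConcaveOn ℝ (Icc 0 (1 / 2)) binEnt := by
  have h : ConcaveOn ℝ (Icc 0 (1 / 2)) binEntropy :=
    strictConcave_binEntropy.concaveOn.subset (Icc_subset_Icc_right (by norm_num))
      (convex_Icc 0 _)
  have hfun : binEnt = fun x => (log 2)⁻¹ • binEntropy x := by
    ext x
    rw [binEnt_eq_binEntropy_div, smul_eq_mul, inv_mul_eq_div]
  rw [hfun]
  exact h.smul (inv_nonneg.2 (log_nonneg one_le_two))

lemma monotoneOn_binEnt : MonotoneOn binEnt (Icc 0 (1 / 2)) := by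
  intro x hx y hy hxy
  simp only [binEnt_eq_binEntropy_div]
  gcongr
  exact binEntropy_strictMonoOn.monotoneOn (by simpa using hx) (by simpa using hy) hxy

lemma concaveOn_cappedBinEnt : ConcaveOn ℝ (Ici 0) cappedBinEnt :=
  concaveOn_binEnt.comp_min_const (by norm_num) monotoneOn_binEnt

theorem stmt_1 (x₁ x₂ : ℝ) (h₁ : 0 ≤ x₁) (h₂ : 0 ≤ x₂) :
    cappedBinEnt (x₁ + x₂) ≤ cappedBinEnt x₁ + cappedBinEnt x₂ :=
  concaveOn_cappedBinEnt.map_add_le_add (by simp [cappedBinEnt, binEnt]) h₁ h₂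
end

section
/- If m, n, r, s are nonnegative real numbers with m·n = r·s, then |m − r| + |m − s| ≥ m − n. -/
/-!
If `m - n` exceeded `|m - r| + |m - s|`, then `r` and `s` would both exceed `n` and `r + s` would
exceed `m + n`. This is impossible: when `m * n = r * s`, the identity
`(r - n) * (s - n) = n * (m + n - r - s)` makes the left side positive and the right side
nonpositive.
-/

section

variable {α : Type*} [CommRing α] [LinearOrder α] [IsStrictOrderedRing α]

theorem sub_mul_sub_eq_of_mul_eq_mul {m n r s : α} (h : m * n = r * s) :
    (r - n) * (s - n) = n * (m + n - r - s) := by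
  linear_combination -h

theorem add_le_add_of_mul_eq_mul {m n r s : α} (hn : 0 ≤ n) (hnr : n < r) (hns : n < s)
    (h : m * n = r * s) : r + s ≤ m + n := by
  by_contra! hlt
  have hpos : 0 < (r - n) * (s - n) := mul_pos (sub_pos.2 hnr) (sub_pos.2 hns)
  have hnonpos : n * (m + n - r - s) ≤ 0 := mul_nonpos_of_nonneg_of_nonpos hn (by linarith)
  rw [sub_mul_sub_eq_of_mul_eq_mul h] at hpos
  exact hnonpos.not_gt hpos

end

theorem stmt_5_general (m n r s : ℝ) (hn : 0 ≤ n)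
    (h : m * n = r * s) : m - n ≤ |m - r| + |m - s| := by
  by_contra! hlt
  have hmr := le_abs_self (m - r)
  have hms := le_abs_self (m - s)
  have hnr : n < r := by linarith [abs_nonneg (m - s)]
  have hns : n < s := by linarith [abs_nonneg (m - r)]
  linarith [add_le_add_of_mul_eq_mul hn hnr hns h]

theorem stmt_5 (m n r s : ℝ) (hm : 0 ≤ m) (hn : 0 ≤ n) (hr : 0 ≤ r) (hs : 0 ≤ s)
    (h : m * n = r * s) : m - n ≤ |m - r| + |m - s| :=
  stmt_5_general m n r s hn h
end

section
/- Let Ω be a finite type, let p_a, p_b, p_c, p_d : Ω → ℝ be nonnegative functions satisfying the rectangle property p_a(t)·p_d(t) = p_b(t)·p_c(t) for every t ∈ Ω, let T ⊆ Ω, and let ε be a real number with ∑_{t ∈ T} (p_a(t) − p_d(t)) ≥ 2ε. Then ∑_{t ∈ Ω} |p_a(t) − p_b(t)| + ∑_{t ∈ Ω} |p_a(t) − p_c(t)| ≥ 2ε. -/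
open Finset

/- If `a > d` then `a > 0`, and the rectangle property gives
`a (a - d) = a² - b c = a (a - b) + b (a - c)`; when `b ≤ a` the right side is at most
`a (|a - b| + |a - c|)`. By symmetry in `b, c` one may assume `b ≤ a`, since `b, c > a`
would force `b c > a d`. Summing over `T` and then over all of `Ω` proves the theorem. -/

theorem sub_le_abs_sub_add_abs_sub_of_mul_eq_mul {a b c d : ℝ} (hb : 0 ≤ b) (hc : 0 ≤ c)
    (hd : 0 ≤ d) (h : a * d = b * c) : a - d ≤ |a - b| + |a - c| := by
  rcases le_or_gt a d with had | hda
  · linarith [abs_nonneg (a - b), abs_nonneg (a - c)]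
  have ha : 0 < a := hd.trans_lt hda
  wlog hba : b ≤ a generalizing b c
  · rcases le_or_gt c a with hca | hac
    · rw [add_comm]
      exact this hc hb (by rw [h, mul_comm]) hca
    · have : a * d < b * c :=
        calc a * d < a * a := mul_lt_mul_of_pos_left hda ha
          _ ≤ b * c := mul_le_mul (not_le.mp hba).le hac.le ha.le hb
      exact absurd h this.ne
  have : a * (a - d) ≤ a * (|a - b| + |a - c|) :=
    calc a * (a - d) = a * (a - b) + b * (a - c) := by linear_combination -h
      _ ≤ a * |a - b| + a * |a - c| := by
        refine add_le_add (mul_le_mul_of_nonneg_left (le_abs_self _) ha.le) ?_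
        exact (mul_le_mul_of_nonneg_left (le_abs_self _) hb).trans
          (mul_le_mul_of_nonneg_right hba (abs_nonneg _))
      _ = a * (|a - b| + |a - c|) := by ring
  exact le_of_mul_le_mul_left this ha

theorem stmt_8_general {Ω : Type*} [Fintype Ω] (pa pb pc pd : Ω → ℝ)
    (hb : ∀ t, 0 ≤ pb t) (hc : ∀ t, 0 ≤ pc t) (hd : ∀ t, 0 ≤ pd t)
    (hrect : ∀ t, pa t * pd t = pb t * pc t)
    (T : Finset Ω) (ε : ℝ)
    (hT : 2 * ε ≤ ∑ t ∈ T, (pa t - pd t)) :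
    2 * ε ≤ (∑ t, |pa t - pb t|) + ∑ t, |pa t - pc t| := by
  calc 2 * ε ≤ ∑ t ∈ T, (pa t - pd t) := hT
    _ ≤ ∑ t ∈ T, (|pa t - pb t| + |pa t - pc t|) := sum_le_sum fun t _ ↦
        sub_le_abs_sub_add_abs_sub_of_mul_eq_mul (hb t) (hc t) (hd t) (hrect t)
    _ ≤ ∑ t, (|pa t - pb t| + |pa t - pc t|) :=
        sum_le_sum_of_subset_of_nonneg (subset_univ T) fun t _ _ ↦ by positivity
    _ = (∑ t, |pa t - pb t|) + ∑ t, |pa t - pc t| := sum_add_distrib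

theorem stmt_8 {Ω : Type*} [Fintype Ω] (pa pb pc pd : Ω → ℝ)
    (ha : ∀ t, 0 ≤ pa t) (hb : ∀ t, 0 ≤ pb t) (hc : ∀ t, 0 ≤ pc t) (hd : ∀ t, 0 ≤ pd t)
    (hrect : ∀ t, pa t * pd t = pb t * pc t)
    (T : Finset Ω) (ε : ℝ)
    (hT : 2 * ε ≤ ∑ t ∈ T, (pa t - pd t)) :
    2 * ε ≤ (∑ t, |pa t - pb t|) + ∑ t, |pa t - pc t| :=
  stmt_8_general pa pb pc pd hb hc hd hrect T ε hT
end
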